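/- arXiv:1407.7509 — 2 statements merged into one kernel-verified Lean document; each statement's English description precedes it below -/
import Mathlib

section
/- Let R be a ring with no non-trivial idempotents such that M_n(R) is nil-clean for some n ≥ 1. Then R is a local ring. -/
/-- A ring is nil-clean if every element is the sum of an idempotent and a nilpotent. -/
def IsNilCleanRing (R : Type*) [Ring R] : Prop :=
  ∀ a : R, ∃ e q : R, IsIdempotentElem e ∧ IsNilpotent q ∧ a = e + q

/-!
A nil-clean ring is clean: `a - 1 = e + q` gives `a = e + (1 + q)` with `1 + q` a unit. Clean rings
are exchange rings: if `a = e + u`, the idempotent `f = u⁻¹ (1 - e) u` lies in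
`S a` and `1 - f` lies in `S (1 - a)`. The exchange property passes to corners `e S e` and to
homomorphic images, and `R` is the image of the corner `E₁₁ Mₙ(R) E₁₁`, so `R` is an exchange ring.
If `R` has only trivial idempotents, the idempotent `f` for `a` is `0` or `1`, so `1 - a` or `a` has
a left inverse; and trivial idempotents make `R` Dedekind-finite (`ba` is idempotent when
`ab = 1`), so that inverse is two-sided.
-/

/-- Nicholson's element-wise characterisation of exchange rings. -/
def IsExchangeRing (S : Type*) [Ring S] : Prop :=
  ∀ a : S, ∃ f r s : S, IsIdempotentElem f ∧ f = r * a ∧ 1 - f = s * (1 - a)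

section Exchange

variable {S : Type*} [Ring S]

theorem exists_isIdempotentElem_of_eq_add_unit {a e : S} (u : Sˣ) (he : IsIdempotentElem e)
    (ha : a = e + u) :
    ∃ f r s : S, IsIdempotentElem f ∧ f = r * a ∧ 1 - f = s * (1 - a) := by
  refine ⟨↑u⁻¹ * (1 - e) * u, ↑u⁻¹ * (1 - e), -(↑u⁻¹ * e), ?_, ?_, ?_⟩
  · calc ↑u⁻¹ * (1 - e) * u * (↑u⁻¹ * (1 - e) * u)
        = ↑u⁻¹ * ((1 - e) * (u * ↑u⁻¹) * (1 - e)) * u := by noncomm_ring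
      _ = ↑u⁻¹ * (1 - e) * u := by rw [u.mul_inv, mul_one, he.one_sub.eq]
  · rw [ha, mul_assoc, mul_assoc, mul_add, he.one_sub_mul_self, zero_add]
  · have hkey : e * (1 - a) = -(e * u) := by rw [ha, mul_sub, mul_add, he.eq]; noncomm_ring
    calc 1 - ↑u⁻¹ * (1 - e) * u = ↑u⁻¹ * u - ↑u⁻¹ * (1 - e) * u := by rw [u.inv_mul]
      _ = -(↑u⁻¹ * (e * (1 - a))) := by rw [hkey]; noncomm_ring
      _ = -(↑u⁻¹ * e) * (1 - a) := by noncomm_ring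

theorem IsNilCleanRing.isExchangeRing (h : IsNilCleanRing S) : IsExchangeRing S := by
  intro a
  obtain ⟨e, q, he, hq, hdec⟩ := h (a - 1)
  exact exists_isIdempotentElem_of_eq_add_unit hq.isUnit_one_add.unit he
    (by rw [IsUnit.unit_spec, add_left_comm, ← hdec, add_sub_cancel])

theorem IsExchangeRing.of_surjective {T : Type*} [Ring T] (h : IsExchangeRing S) (φ : S →+* T)
    (hφ : Function.Surjective φ) : IsExchangeRing T := by
  intro b
  obtain ⟨a, rfl⟩ := hφ b
  obtain ⟨f, r, s, hf, hfr, hfs⟩ := h a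
  exact ⟨φ f, φ r, φ s, hf.map φ, by rw [hfr, map_mul],
    by rw [← map_one φ, ← map_sub, hfs, map_mul, map_sub]⟩

theorem IsExchangeRing.corner (h : IsExchangeRing S) {e : S} (he : IsIdempotentElem e) :
    IsExchangeRing he.Corner := by
  rintro ⟨x, hx⟩
  obtain ⟨hex, hxe⟩ := (Subsemigroup.mem_corner_iff he).mp hx
  obtain ⟨f, r, s, hf, hfr, hfs⟩ := h (x + (1 - e))
  have hfs' : 1 - f = s * (e - x) := by rw [hfs]; noncomm_ring
  have hfe : f * e = f - 1 + e := by
    have : (1 - f) * (1 - e) = 0 := by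
      rw [hfs', mul_assoc, mul_sub (e - x), mul_one, sub_mul, he.eq, hxe, sub_self, mul_zero]
    linear_combination (norm := noncomm_ring) this
  have hefe : e * f * e = e * f := by
    rw [mul_assoc, hfe, mul_add, mul_sub, mul_one, he.eq, sub_add_cancel]
  refine ⟨⟨e * f * e, f, rfl⟩, ⟨e * r * e, r, rfl⟩, ⟨e * s * e, s, rfl⟩, ?_, ?_, ?_⟩ <;>
    apply Subtype.ext
  · show e * f * e * (e * f * e) = e * f * e
    calc e * f * e * (e * f * e) = e * (f * e) * f := by rw [hefe]; noncomm_ring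
      _ = e * (f * f) - e * f + e * e * f := by rw [hfe]; noncomm_ring
      _ = e * f * e := by rw [hf.eq, he.eq, hefe]; abel
  · show e * f * e = e * r * e * x
    calc e * f * e = e * r * (x * e + e - e * e) := by rw [hfr]; noncomm_ring
      _ = e * r * e * x := by rw [hxe, he.eq, add_sub_cancel_right, mul_assoc (e * r), hex]
  · show e - e * f * e = e * s * e * (e - x)
    calc e - e * f * e = e * (1 - f) := by rw [hefe]; noncomm_ring
      _ = e * s * (e * (e - x)) := by rw [hfs', mul_sub e e x, he.eq, hex]; noncomm_ring
      _ = e * s * e * (e - x) := by noncomm_ring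

theorem isDedekindFiniteMonoid_of_isIdempotentElem
    (hidem : ∀ e : S, IsIdempotentElem e → e = 0 ∨ e = 1) : IsDedekindFiniteMonoid S where
  mul_eq_one_symm {a b} hab := by
    have hba : IsIdempotentElem (b * a) := by
      rw [IsIdempotentElem, mul_assoc, ← mul_assoc a, hab, one_mul]
    rcases hidem (b * a) hba with hba0 | hba1
    · have : (1 : S) = 0 := by
        calc (1 : S) = a * (b * a) * b := by rw [← mul_assoc, hab, one_mul, hab]
          _ = 0 := by rw [hba0, mul_zero, zero_mul]
      have := subsingleton_of_zero_eq_one this.symm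
      exact Subsingleton.elim _ _
    · exact hba1

theorem IsExchangeRing.isUnit_or_isUnit_one_sub (h : IsExchangeRing S)
    (hidem : ∀ e : S, IsIdempotentElem e → e = 0 ∨ e = 1) (a : S) :
    IsUnit a ∨ IsUnit (1 - a) := by
  have := isDedekindFiniteMonoid_of_isIdempotentElem hidem
  obtain ⟨f, r, s, hf, hfr, hfs⟩ := h a
  rcases hidem f hf with rfl | rfl
  · exact .inr (.of_mul_eq_one_right s (by rw [← hfs, sub_zero]))
  · exact .inl (.of_mul_eq_one_right r hfr.symm)

end Exchange

namespace Matrix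

variable {n R : Type*} [Fintype n] [DecidableEq n] [Ring R]

theorem isIdempotentElem_single_one (i : n) : IsIdempotentElem (single i i (1 : R)) := by
  rw [IsIdempotentElem, single_mul_single_same, one_mul]

def singleOneCornerEntry (i : n) : (isIdempotentElem_single_one (R := R) i).Corner →+* R where
  toFun M := M.1 i i
  map_one' := single_apply_same ..
  map_mul' := by
    rintro ⟨_, M, rfl⟩ ⟨_, N, rfl⟩
    show (single i i 1 * M * single i i 1 * (single i i 1 * N * single i i 1) : Matrix n n R) i i = _
    simp only [single_mul_mul_single, single_mul_single_same, single_apply_same, one_mul, mul_one]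
  map_zero' := rfl
  map_add' _ _ := rfl

theorem singleOneCornerEntry_surjective (i : n) :
    Function.Surjective (singleOneCornerEntry (R := R) i) :=
  fun x => ⟨⟨_, single i i x, rfl⟩, by
    show (single i i 1 * single i i x * single i i 1 : Matrix n n R) i i = x
    simp only [single_mul_mul_single, single_apply_same, one_mul, mul_one]⟩

end Matrix

theorem stmt5 (R : Type*) [Ring R]
    (hidem : ∀ e : R, IsIdempotentElem e → e = 0 ∨ e = 1)
    (n : ℕ) (hn : 1 ≤ n)
    (h : IsNilCleanRing (Matrix (Fin n) (Fin n) R)) :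
    ∀ a : R, IsUnit a ∨ IsUnit (1 - a) :=
  have i : Fin n := ⟨0, hn⟩
  ((h.isExchangeRing.corner (Matrix.isIdempotentElem_single_one i)).of_surjective _
    (Matrix.singleOneCornerEntry_surjective i)).isUnit_or_isUnit_one_sub hidem
end

section
/- Let R be any ring (not necessarily abelian) and n ≥ 1. If R/J(R) is Boolean and every matrix in M_n(J(R)) is nilpotent, then M_n(R) is nil-clean. -/
/-- A ring is Boolean if every element is idempotent. -/
def IsBooleanRing (R : Type*) [Ring R] : Prop := ∀ a : R, a * a = a

/-!
Over `𝔽₂` every endomorphism `T` of a finite-dimensional space is nil-clean. An idempotent on a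
`T`-invariant subspace `W` and one on `V ⧸ W` combine, through a complement of `W`, into an
idempotent `E` of `V` for which `T - E` is nilpotent as soon as it is on `W` and on `V ⧸ W`; so by
induction on the dimension it suffices to treat `T` with a cyclic vector `v`. Put `x k = T ^ k v`
and `x (n + 1) = ∑ a k • x k`. If `a n = 1` or `x (n + 1) = 0`, then `T` minus the shift along the
basis `x 0, …, x n` is idempotent. Otherwise let `j` be the last index with `a j = 1`; then `T`
minus the shift along the basis `x k` (`k ≤ j`), `x k - x (k - 1)` (`k > j`) is idempotent.

A matrix over a Boolean ring is a combination `∑ s, e s • A s` of `𝔽₂`-matrices `A s` along the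
atoms `e s` of the Boolean subring generated by its entries. The atoms are complete orthogonal
idempotents, so decompositions of the `A s` recombine. Finally, idempotents lift modulo the nil
ideal `M_n(J(R))`, the kernel of `M_n(R) → M_n(R ⧸ J(R))`.
-/

open Module Submodule

lemma ZMod.eq_zero_or_eq_one (x : ZMod 2) : x = 0 ∨ x = 1 := by
  revert x; decide

lemma Pi.isNilpotent_of_forall {ι : Type*} [Finite ι] {R : ι → Type*} [∀ i, MonoidWithZero (R i)]
    {x : ∀ i, R i} (h : ∀ i, IsNilpotent (x i)) : IsNilpotent x := by
  cases nonempty_fintype ι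
  choose k hk using h
  refine ⟨∑ i, k i, funext fun i => ?_⟩
  exact pow_eq_zero_of_le (Finset.single_le_sum (fun _ _ => Nat.zero_le _) (Finset.mem_univ i))
    (hk i)

def IsNilClean {R : Type*} [Ring R] (a : R) : Prop :=
  ∃ e q : R, IsIdempotentElem e ∧ IsNilpotent q ∧ a = e + q

namespace IsNilClean

variable {R S : Type*} [Ring R] [Ring S] {a : R}

lemma of_isNilpotent (h : IsNilpotent a) : IsNilClean a :=
  ⟨0, a, .zero, h, (zero_add a).symm⟩

lemma of_isIdempotentElem_sub {q : R} (hq : IsNilpotent q) (he : IsIdempotentElem (a - q)) :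
    IsNilClean a :=
  ⟨a - q, q, he, hq, (sub_add_cancel a q).symm⟩

lemma map (f : R →+* S) (h : IsNilClean a) : IsNilClean (f a) := by
  obtain ⟨e, q, he, hq, rfl⟩ := h
  exact ⟨f e, f q, he.map f, hq.map f, map_add f e q⟩

lemma pi {ι : Type*} [Finite ι] {A : ι → Type*} [∀ i, Ring (A i)] {x : ∀ i, A i}
    (h : ∀ i, IsNilClean (x i)) : IsNilClean x := by
  choose e q he hq hx using h
  exact ⟨e, q, funext he, Pi.isNilpotent_of_forall hq, funext hx⟩

lemma of_map {f : R →+* S} (hf : Function.Surjective f)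
    (hker : ∀ x ∈ RingHom.ker f, IsNilpotent x) (h : IsNilClean (f a)) : IsNilClean a := by
  obtain ⟨e, q, he, ⟨m, hm⟩, hfa⟩ := h
  obtain ⟨e', he', rfl⟩ := exists_isIdempotentElem_eq_of_ker_isNilpotent f hker e (hf e) he
  have hker' : (a - e') ^ m ∈ RingHom.ker f := by
    rw [RingHom.mem_ker, map_pow, map_sub, hfa, add_sub_cancel_left, hm]
  obtain ⟨k, hk⟩ := hker _ hker'
  exact of_isIdempotentElem_sub ⟨m * k, by rw [pow_mul, hk]⟩ (by rwa [sub_sub_cancel])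

end IsNilClean

lemma IsNilCleanRing.of_surjective {R S : Type*} [Ring R] [Ring S] {f : R →+* S}
    (hf : Function.Surjective f) (h : IsNilCleanRing R) : IsNilCleanRing S := fun b => by
  obtain ⟨a, rfl⟩ := hf b
  exact IsNilClean.map f (h a)

namespace Module.Basis

section Shift

variable {K V : Type*} [CommSemiring K] [AddCommMonoid V] [Module K V] {n : ℕ}
  (b : Basis (Fin n) K V)

noncomputable def shift : Module.End K V :=
  b.constr K fun i => Function.extend Fin.val b 0 (i + 1)

lemma shift_extend (k : ℕ) :
    b.shift (Function.extend Fin.val b 0 k) = Function.extend Fin.val b 0 (k + 1) := by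
  by_cases hk : k < n
  · rw [show k = ((⟨k, hk⟩ : Fin n) : ℕ) from rfl, Fin.val_injective.extend_apply, shift,
      constr_basis]
  · rw [Function.extend_apply' _ _ _ fun ⟨i, hi⟩ => hk (hi ▸ i.isLt),
      Function.extend_apply' _ _ _ fun ⟨i, hi⟩ => hk (by omega), Pi.zero_apply, Pi.zero_apply,
      map_zero]

lemma isNilpotent_shift : IsNilpotent b.shift := by
  have hpow (m k : ℕ) : (b.shift ^ m) (Function.extend Fin.val b 0 k) =
      Function.extend Fin.val b 0 (k + m) := by
    induction m with
    | zero => rfl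
    | succ m ih => rw [pow_succ', Module.End.mul_apply, ih, shift_extend, add_assoc]
  refine ⟨n, b.ext fun i => ?_⟩
  rw [← Fin.val_injective.extend_apply b 0 i, hpow,
    Function.extend_apply' _ _ _ fun ⟨j, hj⟩ => by omega]
  rfl

variable {b} {x : ℕ → V}

lemma extend_val_apply_of_lt (hb : ∀ i : Fin n, b i = x i) {k : ℕ} (hk : k < n) :
    Function.extend Fin.val b 0 k = x k := by
  rw [← hb ⟨k, hk⟩]
  exact Fin.val_injective.extend_apply b 0 ⟨k, hk⟩

lemma shift_apply_of_lt (hb : ∀ i : Fin n, b i = x i) {k : ℕ} (hk : k + 1 < n) :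
    b.shift (x k) = x (k + 1) := by
  rw [← extend_val_apply_of_lt hb (by omega), shift_extend, extend_val_apply_of_lt hb hk]

lemma shift_apply_of_eq (hb : ∀ i : Fin n, b i = x i) {k : ℕ} (hk : k + 1 = n) :
    b.shift (x k) = 0 := by
  rw [← extend_val_apply_of_lt hb (by omega), shift_extend,
    Function.extend_apply' _ _ _ fun ⟨i, hi⟩ => by omega, Pi.zero_apply]

end Shift

lemma exists_basis_sub_pred {K V : Type*} [Field K] [AddCommGroup V] [Module K V] {n : ℕ}
    {b : Basis (Fin n) K V} {x : ℕ → V} (hb : ∀ i : Fin n, b i = x i) (j : ℕ) :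
    ∃ c : Basis (Fin n) K V, ∀ i : Fin n, c i = if j < i then x i - x (i - 1) else x i := by
  set y : ℕ → V := fun k => if j < k then x k - x (k - 1) else x k
  have hy (k : ℕ) (hk : k < n) : y k ∈ span K (Set.range fun i : Fin n => y i) :=
    subset_span ⟨⟨k, hk⟩, rfl⟩
  have hx (k : ℕ) (hk : k < n) : x k ∈ span K (Set.range fun i : Fin n => y i) := by
    induction k with
    | zero => simpa [y] using hy 0 hk
    | succ k ih =>
      by_cases hjk : j < k + 1
      · rw [show x (k + 1) = y (k + 1) + x k by simp [y, hjk]]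
        exact add_mem (hy _ hk) (ih (by omega))
      · simpa [y, hjk] using hy _ hk
  have hspan : ⊤ ≤ span K (Set.range fun i : Fin n => y i) := by
    rw [← b.span_eq, span_le]
    rintro _ ⟨i, rfl⟩
    rw [hb]
    exact hx i i.isLt
  exact ⟨basisOfTopLeSpanOfCardEqFinrank _ hspan (by simp [finrank_eq_card_basis b]),
    fun i => by simp [y]⟩

end Module.Basis

namespace Module.End

section CyclicSpan

variable {K V : Type*} [Field K] [AddCommGroup V] [Module K V] [FiniteDimensional K V]

/-- By Cayley–Hamilton, this is the cyclic subspace generated by `v`. -/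
noncomputable def cyclicSpan (T : End K V) (v : V) : Submodule K V :=
  span K (Set.range fun i : Fin (finrank K V) => (T ^ (i : ℕ)) v)

lemma pow_finrank_apply_mem_cyclicSpan (T : End K V) (v : V) :
    (T ^ finrank K V) v ∈ T.cyclicSpan v := by
  have hCH := congrArg (· v) T.aeval_self_charpoly
  rw [T.charpoly_monic.as_sum, T.charpoly_natDegree] at hCH
  simp only [map_add, map_pow, Polynomial.aeval_X, map_sum, map_mul, Polynomial.aeval_C,
    algebraMap_end_eq_smul_id, Algebra.smul_mul_assoc, LinearMap.add_apply, LinearMap.coe_sum,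
    LinearMap.coe_smul, Finset.sum_apply, Pi.smul_apply, mul_apply, LinearMap.id_coe, id_eq,
    LinearMap.zero_apply] at hCH
  rw [eq_neg_of_add_eq_zero_left hCH]
  exact neg_mem (sum_mem fun i hi =>
    smul_mem _ _ (subset_span ⟨⟨i, Finset.mem_range.mp hi⟩, rfl⟩))

lemma cyclicSpan_le_comap (T : End K V) (v : V) :
    T.cyclicSpan v ≤ (T.cyclicSpan v).comap T := by
  refine span_le.mpr ?_
  rintro _ ⟨i, rfl⟩
  rw [SetLike.mem_coe, mem_comap, ← mul_apply, ← pow_succ']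
  by_cases hi : (i : ℕ) + 1 < finrank K V
  · exact subset_span ⟨⟨i + 1, hi⟩, rfl⟩
  · rw [show (i : ℕ) + 1 = finrank K V by omega]
    exact T.pow_finrank_apply_mem_cyclicSpan v

end CyclicSpan

lemma isNilpotent_of_restrict_of_mapQ {R M : Type*} [Ring R] [AddCommGroup M] [Module R M]
    {N : End R M} {W : Submodule R M} (hN : W ≤ W.comap N) (h₁ : IsNilpotent (N.restrict hN))
    (h₂ : IsNilpotent (W.mapQ W N hN)) : IsNilpotent N := by
  obtain ⟨k, hk⟩ := h₁
  obtain ⟨l, hl⟩ := h₂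
  refine ⟨k + l, LinearMap.ext fun x => ?_⟩
  have hx : (N ^ l) x ∈ W := by
    rw [← Quotient.mk_eq_zero, ← mapQ_apply W W (N ^ l) (h := le_comap_pow_of_le_comap W hN l),
      mapQ_pow W hN, hl, LinearMap.zero_apply]
  have := congrArg Subtype.val (LinearMap.congr_fun hk ⟨_, hx⟩)
  rw [pow_restrict, LinearMap.restrict_apply] at this
  rw [pow_add, mul_apply]
  exact this

section Glue

variable {K V : Type*} [DivisionRing K] [AddCommGroup V] [Module K V] {W : Submodule K V}

lemma exists_isIdempotentElem_restrict_mapQ {E₁ : End K W} {E₂ : End K (V ⧸ W)}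
    (h₁ : IsIdempotentElem E₁) (h₂ : IsIdempotentElem E₂) :
    ∃ (E : End K V) (hE : W ≤ W.comap E),
      IsIdempotentElem E ∧ E.restrict hE = E₁ ∧ W.mapQ W E hE = E₂ := by
  obtain ⟨U, hU⟩ := W.exists_isCompl
  let p := W.projectionOnto U hU
  let σ := U.subtype ∘ₗ (W.quotientEquivOfIsCompl U hU).toLinearMap
  have hpW (w : W) : p w = w := projectionOnto_apply_left hU w
  have hpσ (y : V ⧸ W) : p (σ y) = 0 := projectionOnto_apply_right hU _
  have hπW (w : W) : (Submodule.Quotient.mk (w : V) : V ⧸ W) = 0 :=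
    (Quotient.mk_eq_zero W).mpr w.2
  have hπσ (y : V ⧸ W) : (Submodule.Quotient.mk (σ y) : V ⧸ W) = y :=
    mk_quotientEquivOfIsCompl_apply hU y
  let E : End K V := W.subtype ∘ₗ E₁ ∘ₗ p + σ ∘ₗ E₂ ∘ₗ W.mkQ
  have hEW (w : W) : E w = E₁ w := by simp [E, hpW, hπW]
  have hπE (x : V) : W.mkQ (E x) = E₂ (W.mkQ x) := by simp [E, hπW, hπσ]
  have hE : W ≤ W.comap E := fun w hw => by
    rw [mem_comap, hEW ⟨w, hw⟩]
    exact (E₁ _).2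
  refine ⟨E, hE, LinearMap.ext fun x => ?_, LinearMap.ext fun w => Subtype.ext (hEW w),
    W.linearMap_qext (LinearMap.ext hπE)⟩
  rw [mul_apply]
  simp [E, hpW, hpσ, hπW, hπσ, ← mul_apply, h₁.eq, h₂.eq]

theorem isNilClean_of_restrict_of_mapQ {T : End K V} (hT : W ≤ W.comap T)
    (h₁ : IsNilClean (T.restrict hT)) (h₂ : IsNilClean (W.mapQ W T hT)) : IsNilClean T := by
  obtain ⟨E₁, q₁, he₁, hq₁, hT₁⟩ := h₁
  obtain ⟨E₂, q₂, he₂, hq₂, hT₂⟩ := h₂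
  obtain ⟨E, hE, he, rfl, rfl⟩ := exists_isIdempotentElem_restrict_mapQ he₁ he₂
  have hN : W ≤ W.comap (T - E) := fun x hx =>
    show (T - E) x ∈ W from sub_mem (hT hx) (hE hx)
  refine IsNilClean.of_isIdempotentElem_sub (isNilpotent_of_restrict_of_mapQ hN ?_ ?_)
    (by rwa [sub_sub_cancel])
  · rwa [← LinearMap.restrict_sub hT hE, hT₁, add_sub_cancel_left]
  · have hmapQ : W.mapQ W (T - E) hN = W.mapQ W T hT - W.mapQ W E hE := by ext; simp
    rwa [hmapQ, hT₂, add_sub_cancel_left]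

end Glue

section Cyclic

variable {K V : Type*} [CommRing K] [AddCommGroup V] [Module K V] {n : ℕ}

lemma isIdempotentElem_sub_shift_of_smul_eq (S : End K V) (v : V) (b : Basis (Fin (n + 1)) K V)
    (hb : ∀ i : Fin (n + 1), b i = (S ^ (i : ℕ)) v)
    (h : b.repr ((S ^ (n + 1)) v) (Fin.last n) • (S ^ (n + 1)) v = (S ^ (n + 1)) v) :
    IsIdempotentElem (S - b.shift) := by
  set x : ℕ → V := fun k => (S ^ k) v
  replace hb : ∀ i : Fin (n + 1), b i = x i := hb
  have hSx (k : ℕ) : S (x k) = x (k + 1) := by simp only [x, pow_succ', mul_apply]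
  have hE_lt (k : ℕ) (hk : k < n) : (S - b.shift) (x k) = 0 := by
    rw [LinearMap.sub_apply, hSx, b.shift_apply_of_lt hb (by omega), sub_self]
  have hE_last : (S - b.shift) (x n) = x (n + 1) := by
    rw [LinearMap.sub_apply, hSx, b.shift_apply_of_eq hb rfl, sub_zero]
  have hE_next : (S - b.shift) (x (n + 1)) = x (n + 1) := by
    conv_lhs => rw [← b.sum_repr (x (n + 1))]
    rw [map_sum, Fin.sum_univ_castSucc]
    simp only [map_smul, hb, Fin.val_castSucc, Fin.val_last, hE_lt _ (Fin.is_lt _), smul_zero,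
      Finset.sum_const_zero, zero_add, hE_last]
    exact h
  refine b.ext fun i => ?_
  rw [mul_apply]
  refine Fin.lastCases ?_ (fun i => ?_) i
  · rw [hb, Fin.val_last, hE_last, hE_next]
  · rw [hb, Fin.val_castSucc, hE_lt i i.is_lt, map_zero]

lemma sub_shift_apply_pow (S : End K V) (v : V) {c : Basis (Fin (n + 1)) K V} {j : ℕ}
    (hjn : j < n) (hc : ∀ i : Fin (n + 1),
      c i = if j < i then (S ^ (i : ℕ)) v - (S ^ ((i : ℕ) - 1)) v else (S ^ (i : ℕ)) v)
    {k : ℕ} (hk : k ≤ n) :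
    (S - c.shift) ((S ^ k) v) =
      if k < j then 0
      else if k < n then (S ^ j) v
      else (S ^ (n + 1)) v - (S ^ n) v + (S ^ j) v := by
  obtain _ | m := n
  · omega
  set x : ℕ → V := fun k => (S ^ k) v
  set y : ℕ → V := fun k => if j < k then x k - x (k - 1) else x k
  replace hc : ∀ i : Fin (m + 2), c i = y i := hc
  have hSx (k : ℕ) : S (x k) = x (k + 1) := by simp only [x, pow_succ', mul_apply]
  have hy_le {k : ℕ} (hk : k ≤ j) : y k = x k := if_neg (by omega)
  have hy_succ {k : ℕ} (hk : j ≤ k) : y (k + 1) = x (k + 1) - x k := if_pos (by omega)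
  have hE_lt {k : ℕ} (hk : k < j) : (S - c.shift) (x k) = 0 := by
    rw [LinearMap.sub_apply, hSx, ← hy_le hk.le, c.shift_apply_of_lt hc (by omega),
      hy_le (by omega), sub_self]
  have hE_j : (S - c.shift) (x j) = x j := by
    rw [LinearMap.sub_apply, hSx, ← hy_le le_rfl, c.shift_apply_of_lt hc (by omega),
      hy_succ le_rfl, hy_le le_rfl, sub_sub_cancel]
  have hE_y {k : ℕ} (hjk : j ≤ k) (hk : k + 1 ≤ m) : (S - c.shift) (y (k + 1)) = 0 := by
    rw [LinearMap.sub_apply, c.shift_apply_of_lt hc (by omega), hy_succ hjk,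
      hy_succ (by omega : j ≤ k + 1), map_sub, hSx, hSx, sub_self]
  have hE_mid {k : ℕ} (hjk : j ≤ k) (hk : k ≤ m) : (S - c.shift) (x k) = x j := by
    induction k, hjk using Nat.le_induction with
    | base => exact hE_j
    | succ k hjk ih =>
      rw [← sub_add_cancel (x (k + 1)) (x k), ← hy_succ hjk, map_add, hE_y hjk hk,
        ih (by omega), zero_add]
  have hE_top : (S - c.shift) (x (m + 1)) = x (m + 2) - x (m + 1) + x j := by
    conv_lhs => rw [← sub_add_cancel (x (m + 1)) (x m), ← hy_succ (by omega)]
    rw [map_add, hE_mid (by omega) le_rfl, LinearMap.sub_apply, c.shift_apply_of_eq hc rfl,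
      sub_zero, hy_succ (by omega), map_sub, hSx, hSx]
  split_ifs with h₁ h₂
  · exact hE_lt h₁
  · exact hE_mid (by omega) (by omega)
  · rw [show k = m + 1 by omega]
    exact hE_top

end Cyclic

section CharTwo

variable {K V : Type*} [Field K] [CharP K 2] [AddCommGroup V] [Module K V] {n : ℕ}

lemma isNilClean_of_repr_eq_one (S : End K V) (v : V) (b : Basis (Fin (n + 1)) K V)
    (hb : ∀ i : Fin (n + 1), b i = (S ^ (i : ℕ)) v) {j : ℕ} (hjn : j < n)
    (hj : b.repr ((S ^ (n + 1)) v) ⟨j, by omega⟩ = 1)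
    (hgt : ∀ i : Fin (n + 1), j < i → b.repr ((S ^ (n + 1)) v) i = 0) : IsNilClean S := by
  obtain ⟨c, hc⟩ := b.exists_basis_sub_pred (x := fun k => (S ^ k) v) hb j
  have hE (k : ℕ) (hk : k ≤ n) := sub_shift_apply_pow S v hjn hc hk
  have hE_j : (S - c.shift) ((S ^ j) v) = (S ^ j) v := by simpa [hjn] using hE j hjn.le
  have hE_next : (S - c.shift) ((S ^ (n + 1)) v) = (S ^ j) v := by
    conv_lhs => rw [← b.sum_repr ((S ^ (n + 1)) v)]
    rw [map_sum, Finset.sum_eq_single ⟨j, by omega⟩ (fun i _ hij => ?_) (by simp), map_smul, hj,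
      one_smul, hb, hE_j]
    rcases lt_or_gt_of_ne (Fin.val_ne_of_ne hij) with h | h
    · rw [map_smul, hb, hE i i.is_le, if_pos h, smul_zero]
    · rw [hgt i h, zero_smul, map_zero]
  have hE_top : (S - c.shift) ((S ^ (n + 1)) v - (S ^ n) v + (S ^ j) v) =
      (S ^ (n + 1)) v - (S ^ n) v + (S ^ j) v := by
    have h2 : (2 : K) • ((S ^ n) v - (S ^ (n + 1)) v) = 0 := by
      rw [CharTwo.two_eq_zero, zero_smul]
    rw [map_add, map_sub, hE_next, hE n le_rfl, if_neg (by omega), if_neg (lt_irrefl n), hE_j]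
    linear_combination (norm := module) h2
  refine IsNilClean.of_isIdempotentElem_sub c.isNilpotent_shift (b.ext fun i => ?_)
  rw [mul_apply, hb, hE i i.is_le]
  split_ifs
  · rw [map_zero]
  · exact hE_j
  · exact hE_top

end CharTwo

variable {V : Type*} [AddCommGroup V] [Module (ZMod 2) V]

theorem isNilClean_of_basis_eq_pow_apply (S : End (ZMod 2) V) (v : V) {n : ℕ}
    (b : Basis (Fin n) (ZMod 2) V) (hb : ∀ i : Fin n, b i = (S ^ (i : ℕ)) v) : IsNilClean S := by
  obtain _ | n := n
  · exact IsNilClean.of_isNilpotent ⟨1, by rw [pow_one]; exact b.ext fun i => i.elim0⟩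
  set a := b.repr ((S ^ (n + 1)) v)
  by_cases hA : a (Fin.last n) • (S ^ (n + 1)) v = (S ^ (n + 1)) v
  · exact IsNilClean.of_isIdempotentElem_sub b.isNilpotent_shift
      (isIdempotentElem_sub_shift_of_smul_eq S v b hb hA)
  have hlast : a (Fin.last n) = 0 :=
    (ZMod.eq_zero_or_eq_one _).resolve_right fun h => hA (by rw [h, one_smul])
  have hne : (Finset.univ.filter fun i => a i ≠ 0).Nonempty := by
    by_contra! h
    refine hA ?_
    have ha : a = 0 := Finsupp.ext fun i => by
      simpa using Finset.filter_eq_empty_iff.mp h (Finset.mem_univ i)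
    rw [b.repr.map_eq_zero_iff.mp ha, smul_zero]
  set j := (Finset.univ.filter fun i => a i ≠ 0).max' hne
  have hj : a j ≠ 0 := (Finset.mem_filter.mp (Finset.max'_mem _ hne)).2
  have hgt (i : Fin (n + 1)) (hi : (j : ℕ) < i) : a i = 0 := by
    by_contra h
    exact (Finset.le_max' _ i (by simp [h])).not_gt hi
  have hjn : (j : ℕ) < n := lt_of_le_of_ne (Nat.lt_succ_iff.mp j.is_lt) fun h =>
    hj (by rw [show j = Fin.last n from Fin.ext h]; exact hlast)
  exact isNilClean_of_repr_eq_one S v b hb hjn ((ZMod.eq_zero_or_eq_one _).resolve_left hj) hgt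

theorem isNilClean_zmod_two [FiniteDimensional (ZMod 2) V] (T : End (ZMod 2) V) :
    IsNilClean T := by
  induction hd : finrank (ZMod 2) V using Nat.strong_induction_on generalizing V with
  | _ d ih =>
  rcases subsingleton_or_nontrivial V with hV | hV
  · exact IsNilClean.of_isNilpotent ⟨1, Subsingleton.elim _ _⟩
  obtain ⟨v, hv⟩ := exists_ne (0 : V)
  by_cases htop : T.cyclicSpan v = ⊤
  · have hspan : ⊤ ≤ span (ZMod 2)
        (Set.range fun i : Fin (finrank (ZMod 2) V) => (T ^ (i : ℕ)) v) := htop.ge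
    exact isNilClean_of_basis_eq_pow_apply T v
      (basisOfTopLeSpanOfCardEqFinrank _ hspan (Fintype.card_fin _)) fun i => by simp
  have hvW : v ∈ T.cyclicSpan v := subset_span ⟨⟨0, finrank_pos⟩, by simp⟩
  have hpos : 1 ≤ finrank (ZMod 2) (T.cyclicSpan v) :=
    one_le_finrank_iff.mpr ((Submodule.ne_bot_iff _).mpr ⟨v, hvW, hv⟩)
  have hlt : finrank (ZMod 2) (T.cyclicSpan v) < d := hd ▸ finrank_lt htop
  have hsum := (T.cyclicSpan v).finrank_quotient_add_finrank
  exact isNilClean_of_restrict_of_mapQ (T.cyclicSpan_le_comap v) (ih _ hlt _ rfl)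
    (ih _ (by omega) _ rfl)

end Module.End

theorem isNilCleanRing_matrix_zmod_two {m : Type*} [Fintype m] [DecidableEq m] :
    IsNilCleanRing (Matrix m m (ZMod 2)) :=
  IsNilCleanRing.of_surjective (f := LinearMap.toMatrixAlgEquiv'.toRingEquiv.toRingHom)
    LinearMap.toMatrixAlgEquiv'.surjective Module.End.isNilClean_zmod_two

namespace CompleteOrthogonalIdempotents

variable {R A I : Type*} [CommRing R] [Ring A] [Algebra R A] [Fintype I] {e : I → R}

def sumSMulRingHom (he : CompleteOrthogonalIdempotents e) : (I → A) →+* A where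
  toFun x := ∑ i, e i • x i
  map_one' := by simp only [Pi.one_apply, ← Finset.sum_smul, he.complete, one_smul]
  map_mul' x y := by
    classical
    simp only [Pi.mul_apply, Finset.sum_mul_sum, smul_mul_smul_comm, he.mul_eq, ite_smul,
      zero_smul, Finset.sum_ite_eq, Finset.mem_univ, if_true]
  map_zero' := by simp
  map_add' x y := by simp [smul_add, Finset.sum_add_distrib]

lemma sumSMulRingHom_apply (he : CompleteOrthogonalIdempotents e) (x : I → A) :
    he.sumSMulRingHom x = ∑ i, e i • x i := rfl

end CompleteOrthogonalIdempotents

namespace BooleanRing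

variable {B : Type*} [BooleanRing B]

variable (B) in
/-- `B` may be the zero ring, so this uses `ringChar B ∣ 2` rather than `CharP B 2`. -/
noncomputable def zmodTwoHom : ZMod 2 →+* B :=
  ZMod.castHom (ringChar.dvd (by rw [Nat.cast_two, ← one_add_one_eq_two, add_self])) B

def literal (a : B) (x : ZMod 2) : B := if x = 1 then a else 1 - a

lemma literal_mul_literal {a : B} {x y : ZMod 2} (h : x ≠ y) :
    literal a x * literal a y = 0 := by
  obtain rfl | rfl := ZMod.eq_zero_or_eq_one x <;> obtain rfl | rfl := ZMod.eq_zero_or_eq_one y <;>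
    simp_all [literal, add_mul, mul_add, mul_self, add_self]

lemma sum_literal (a : B) : ∑ x, literal a x = 1 := by
  rw [show (Finset.univ : Finset (ZMod 2)) = {0, 1} by decide, Finset.sum_pair zero_ne_one]
  simp [literal, add_assoc, add_self]

lemma literal_mul_self (a : B) (x : ZMod 2) :
    literal a x * a = literal a x * zmodTwoHom B x := by
  obtain rfl | rfl := ZMod.eq_zero_or_eq_one x <;> simp [literal, add_mul, mul_self, add_self]

variable {ι : Type*} [Fintype ι] [DecidableEq ι]

/-- The atoms of the Boolean subring generated by the `a i`, indexed by sign patterns. -/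
def atom (a : ι → B) (s : ι → ZMod 2) : B := ∏ i, literal (a i) (s i)

lemma completeOrthogonalIdempotents_atom (a : ι → B) :
    CompleteOrthogonalIdempotents (atom a) := by
  refine CompleteOrthogonalIdempotents.iff_ortho_complete.mpr ⟨fun s t hst => ?_, ?_⟩
  · obtain ⟨i, hi⟩ := Function.ne_iff.mp hst
    rw [atom, atom, ← Finset.prod_mul_distrib]
    exact Finset.prod_eq_zero (Finset.mem_univ i) (literal_mul_literal hi)
  · simp only [atom, ← Fintype.prod_sum, sum_literal, Finset.prod_const_one]

lemma atom_mul (a : ι → B) (s : ι → ZMod 2) (i : ι) :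
    atom a s * a i = atom a s * zmodTwoHom B (s i) := by
  rw [atom, ← Finset.prod_erase_mul _ _ (Finset.mem_univ i), mul_assoc, mul_assoc,
    literal_mul_self]

theorem isNilCleanRing_matrix {m : Type*} [Fintype m] [DecidableEq m] :
    IsNilCleanRing (Matrix m m B) := by
  intro A
  have he := completeOrthogonalIdempotents_atom fun p : m × m => A p.1 p.2
  let pattern (s : m × m → ZMod 2) : Matrix m m (ZMod 2) := Matrix.of fun i j => s (i, j)
  let Ψ := he.sumSMulRingHom (A := Matrix m m B)
  have hA : Ψ (fun s => (zmodTwoHom B).mapMatrix (pattern s)) = A := by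
    ext i j
    simp only [Ψ, he.sumSMulRingHom_apply, Matrix.sum_apply, Matrix.smul_apply, smul_eq_mul,
      RingHom.mapMatrix_apply, Matrix.map_apply, Matrix.of_apply, pattern, ← atom_mul,
      ← Finset.sum_mul, he.complete, one_mul]
  rw [← hA]
  exact (IsNilClean.pi fun s =>
    IsNilClean.map _ (isNilCleanRing_matrix_zmod_two (pattern s))).map Ψ

end BooleanRing

theorem stmt7_general (R : Type*) [Ring R] (n : ℕ)
    (hbool : IsBooleanRing (TwoSidedIdeal.jacobson (⊥ : TwoSidedIdeal R)).ringCon.Quotient)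
    (hnil : ∀ A : Matrix (Fin n) (Fin n) R,
      (∀ i j, A i j ∈ TwoSidedIdeal.jacobson (⊥ : TwoSidedIdeal R)) → IsNilpotent A) :
    IsNilCleanRing (Matrix (Fin n) (Fin n) R) := by
  set J := TwoSidedIdeal.jacobson (⊥ : TwoSidedIdeal R)
  let _ : BooleanRing J.ringCon.Quotient :=
    { (inferInstance : Ring J.ringCon.Quotient) with isIdempotentElem := hbool }
  let π : Matrix (Fin n) (Fin n) R →+* Matrix (Fin n) (Fin n) J.ringCon.Quotient :=
    J.ringCon.mk'.mapMatrix
  have hπ : Function.Surjective π := fun B =>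
    ⟨fun i j => (J.ringCon.mk'_surjective (B i j)).choose,
      funext₂ fun i j => (J.ringCon.mk'_surjective (B i j)).choose_spec⟩
  have hker (A) (hA : A ∈ RingHom.ker π) : IsNilpotent A :=
    hnil A fun i j => J.ringCon.eq.mp (congrFun₂ hA i j)
  exact fun A => IsNilClean.of_map hπ hker (BooleanRing.isNilCleanRing_matrix (π A))

theorem stmt7 (R : Type*) [Ring R] (n : ℕ) (hn : 1 ≤ n)
    (hbool : IsBooleanRing (TwoSidedIdeal.jacobson (⊥ : TwoSidedIdeal R)).ringCon.Quotient)
    (hnil : ∀ A : Matrix (Fin n) (Fin n) R,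
      (∀ i j, A i j ∈ TwoSidedIdeal.jacobson (⊥ : TwoSidedIdeal R)) → IsNilpotent A) :
    IsNilCleanRing (Matrix (Fin n) (Fin n) R) :=
  stmt7_general R n hbool hnil
end
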